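/- Let G be a 2K₂-free graph containing an induced 5-cycle Q = {v₁, v₂, v₃, v₄, v₅} with vᵢ adjacent to v_{i+1} (indices modulo 5). For each i, let Aᵢ = {u ∈ V(G)\Q : N(u) ∩ Q = {v_{i−1}, v_{i+1}}}, Sᵢ = Aᵢ ∪ {vᵢ}, and Z = {u ∈ V(G)\Q : N(u) ∩ Q = ∅}. Then for each i the set Sᵢ ∪ Z is a stable (independent) set in G. -/

import Mathlib

open SimpleGraph

/-- The join `G ∨ H` of two graphs: the disjoint union of `G` and `H` together with
all edges between the two parts. -/
def SimpleGraph.join {α β : Type*} (G : SimpleGraph α) (H : SimpleGraph β) :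
    SimpleGraph (α ⊕ β) where
  Adj u v := match u, v with
    | Sum.inl u, Sum.inl v => G.Adj u v
    | Sum.inr u, Sum.inr v => H.Adj u v
    | Sum.inl _, Sum.inr _ => True
    | Sum.inr _, Sum.inl _ => True
  symm := ⟨fun u v => match u, v with
    | Sum.inl u, Sum.inl v => fun h => G.adj_symm h
    | Sum.inr u, Sum.inr v => fun h => H.adj_symm h
    | Sum.inl _, Sum.inr _ => fun _ => trivial
    | Sum.inr _, Sum.inl _ => fun _ => trivial⟩
  loopless := ⟨fun u => by cases u <;> simp⟩

/-- `G` is `H`-free: `G` has no induced subgraph isomorphic to `H`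
(no graph embedding of `H` into `G`). -/
def SimpleGraph.HFree {α β : Type*} (G : SimpleGraph α) (H : SimpleGraph β) : Prop :=
  ¬ Nonempty (H ↪g G)

/-- `2K₂`: the disjoint union of two copies of `K₂`. -/
def twoK2 : SimpleGraph (Fin 2 ⊕ Fin 2) :=
  (⊤ : SimpleGraph (Fin 2)) ⊕g (⊤ : SimpleGraph (Fin 2))

/-- `P₄ ∨ Kₙ`: the join of the path on `4` vertices with the complete graph on `n` vertices. -/
def P4JoinK (n : ℕ) : SimpleGraph (Fin 4 ⊕ Fin n) :=
  SimpleGraph.join (pathGraph 4) (⊤ : SimpleGraph (Fin n))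

/-- `Aᵢ`: vertices outside the induced five-cycle `v` whose neighbourhood on the cycle
is exactly `{v (i-1), v (i+1)}`. -/
def Aset {V : Type*} (G : SimpleGraph V) (v : Fin 5 → V) (i : Fin 5) : Set V :=
  {u | u ∉ Set.range v ∧ G.neighborSet u ∩ Set.range v = {v (i - 1), v (i + 1)}}

/-- `Bᵢ`: vertices outside the induced five-cycle `v` whose neighbourhood on the cycle
is exactly `{v i, v (i-2), v (i+2)}`. -/
def Bset {V : Type*} (G : SimpleGraph V) (v : Fin 5 → V) (i : Fin 5) : Set V :=
  {u | u ∉ Set.range v ∧ G.neighborSet u ∩ Set.range v = {v i, v (i - 2), v (i + 2)}}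

/-- `Dᵢ`: vertices outside the induced five-cycle `v` whose neighbourhood on the cycle
is exactly `Q \ {v i}`. -/
def Dset {V : Type*} (G : SimpleGraph V) (v : Fin 5 → V) (i : Fin 5) : Set V :=
  {u | u ∉ Set.range v ∧ G.neighborSet u ∩ Set.range v = Set.range v \ {v i}}

/-- `F`: vertices outside the induced five-cycle `v` adjacent to all of the cycle. -/
def Fset {V : Type*} (G : SimpleGraph V) (v : Fin 5 → V) : Set V :=
  {u | u ∉ Set.range v ∧ G.neighborSet u ∩ Set.range v = Set.range v}

/-- `Z`: vertices outside the induced five-cycle `v` with no neighbour on the cycle. -/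
def Zset {V : Type*} (G : SimpleGraph V) (v : Fin 5 → V) : Set V :=
  {u | u ∉ Set.range v ∧ G.neighborSet u ∩ Set.range v = ∅}


lemma no2K2 {V : Type} (G : SimpleGraph V) (h2 : G.HFree twoK2)
    {a b c d : V} (hab : G.Adj a b) (hcd : G.Adj c d)
    (hac : ¬ G.Adj a c) (had : ¬ G.Adj a d) (hbc : ¬ G.Adj b c) (hbd : ¬ G.Adj b d)
    (nac : a ≠ c) (nad : a ≠ d) (nbc : b ≠ c) (nbd : b ≠ d) : False := by
  apply h2
  refine ⟨⟨⟨Sum.elim ![a,b] ![c,d], ?_⟩, ?_⟩⟩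
  · have nab := hab.ne
    have ncd := hcd.ne
    intro s t h
    rcases s with s | s <;> rcases t with t | t <;>
      fin_cases s <;> fin_cases t <;> simp_all
  · intro s t
    change G.Adj (Sum.elim ![a,b] ![c,d] s) (Sum.elim ![a,b] ![c,d] t) ↔ twoK2.Adj s t
    have hba := hab.symm
    have hdc := hcd.symm
    have hca : ¬ G.Adj c a := fun h => hac h.symm
    have hda : ¬ G.Adj d a := fun h => had h.symm
    have hcb : ¬ G.Adj c b := fun h => hbc h.symm
    have hdb : ¬ G.Adj d b := fun h => hbd h.symm
    rcases s with s | s <;> rcases t with t | t <;>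
      fin_cases s <;> fin_cases t <;>
      simp_all [twoK2, G.irrefl]

lemma memAZ {V : Type} {G : SimpleGraph V} {v : Fin 5 → V} (hv : Function.Injective v)
    {i : Fin 5} {u : V} (hu : u ∈ Aset G v i ∪ Zset G v) :
    u ∉ Set.range v ∧ ∀ j : Fin 5, j ≠ i - 1 → j ≠ i + 1 → ¬ G.Adj u (v j) := by
  rcases hu with hu | hu
  · obtain ⟨h1, h2⟩ := hu
    refine ⟨h1, fun j hj1 hj2 hadj => ?_⟩
    have : v j ∈ G.neighborSet u ∩ Set.range v := ⟨hadj, ⟨j, rfl⟩⟩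
    rw [h2] at this
    rcases this with h | h
    · exact hj1 (hv h)
    · exact hj2 (hv h)
  · obtain ⟨h1, h2⟩ := hu
    refine ⟨h1, fun j _ _ hadj => ?_⟩
    have : v j ∈ G.neighborSet u ∩ Set.range v := ⟨hadj, ⟨j, rfl⟩⟩
    rw [h2] at this
    exact this

/-- In a `2K₂`-free graph with an induced five-cycle `v₁ … v₅`, each set `Sᵢ ∪ Z`
(where `Sᵢ = Aᵢ ∪ {vᵢ}`) is a stable set. -/
theorem stmt14 {V : Type} [Fintype V] (G : SimpleGraph V)
    (h2 : G.HFree twoK2)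
    (v : Fin 5 → V) (hv : Function.Injective v)
    (hc5 : ∀ i j : Fin 5, G.Adj (v i) (v j) ↔ j = i + 1 ∨ i = j + 1) :
    ∀ i : Fin 5, ∀ x ∈ Aset G v i ∪ {v i} ∪ Zset G v,
      ∀ y ∈ Aset G v i ∪ {v i} ∪ Zset G v, ¬ G.Adj x y :=  by
  have hfin : ∀ i : Fin 5, i ≠ i - 1 ∧ i ≠ i + 1 ∧ i + 2 ≠ i - 1 ∧ i + 2 ≠ i + 1 ∧
      i + 3 ≠ i - 1 ∧ i + 3 ≠ i + 1 := by decide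
  intro i x hx y hy hadj
  obtain ⟨f1, f2, f3, f4, f5, f6⟩ := hfin i
  -- rewrite the union membership into A ∪ Z or = v i
  have split : ∀ u : V, u ∈ Aset G v i ∪ {v i} ∪ Zset G v →
      u ∈ Aset G v i ∪ Zset G v ∨ u = v i := by
    intro u hu
    rcases hu with (hu | hu) | hu
    · exact Or.inl (Or.inl hu)
    · exact Or.inr hu
    · exact Or.inl (Or.inr hu)
  rcases split x hx with hx' | rfl
  · obtain ⟨hxr, hxn⟩ := memAZ hv hx'
    rcases split y hy with hy' | rfl
    · obtain ⟨hyr, hyn⟩ := memAZ hv hy'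
      exact no2K2 G h2 hadj ((hc5 (i+2) (i+3)).mpr (Or.inl ((by decide : ∀ k : Fin 5, k + 3 = k + 2 + 1) i)))
        (hxn _ f3 f4) (hxn _ f5 f6) (hyn _ f3 f4) (hyn _ f5 f6)
        (fun h => hxr ⟨_, h.symm⟩) (fun h => hxr ⟨_, h.symm⟩)
        (fun h => hyr ⟨_, h.symm⟩) (fun h => hyr ⟨_, h.symm⟩)
    · exact hxn i f1 f2 hadj
  · rcases split y hy with hy' | rfl
    · obtain ⟨hyr, hyn⟩ := memAZ hv hy'
      exact hyn i f1 f2 hadj.symm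
    · exact G.irrefl hadj
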